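/- arXiv:2111.12546 — 3 statements merged into one kernel-verified Lean document; each statement's English description precedes it below -/
import Mathlib

section
/- Let ω > 0, c > 0, R > 0 and t₁ < t₂. Suppose ρ ∈ C²((t₁, t₂)) ∩ C⁰([t₁, t₂]) satisfies ρ''(t) + c ρ'(t) ≥ ω on (t₁, t₂) and 0 ≤ ρ(t) ≤ R on [t₁, t₂]. Then t₂ - t₁ ≤ 2(Rc + √(R²c² + 2Rω))/ω. -/
open Set Real

private lemma mono_aux {a b : ℝ} {f f' : ℝ → ℝ} (hab : a ≤ b)
    (hc : ContinuousOn f (Set.Icc a b))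
    (hd : ∀ t ∈ Set.Ioo a b, HasDerivAt f (f' t) t)
    (h0 : ∀ t ∈ Set.Ioo a b, 0 ≤ f' t) : f a ≤ f b := by
  have H := monotoneOn_of_deriv_nonneg (convex_Icc a b) hc
    (fun t ht => by
      rw [interior_Icc] at ht
      exact (hd t ht).differentiableAt.differentiableWithinAt)
    (fun t ht => by
      rw [interior_Icc] at ht
      rw [(hd t ht).deriv]; exact h0 t ht)
  exact H (Set.left_mem_Icc.2 hab) (Set.right_mem_Icc.2 hab) hab

/-- A function with `0 ≤ ρ ≤ R` satisfying `ρ'' + cρ' ≥ ω` on `(t₁, t₂)` can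
only do so on an interval of length at most `2(Rc + √(R²c² + 2Rω))/ω`. -/
theorem length_bound_of_diff_ineq
    (ω c R t₁ t₂ : ℝ) (hω : 0 < ω) (hc : 0 < c) (hR : 0 < R) (ht : t₁ < t₂)
    (ρ ρ' ρ'' : ℝ → ℝ)
    (hcont : ContinuousOn ρ (Icc t₁ t₂))
    (hd1 : ∀ t ∈ Ioo t₁ t₂, HasDerivAt ρ (ρ' t) t)
    (hd2 : ∀ t ∈ Ioo t₁ t₂, HasDerivAt ρ' (ρ'' t) t)
    (hineq : ∀ t ∈ Ioo t₁ t₂, ω ≤ ρ'' t + c * ρ' t)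
    (hbound : ∀ t ∈ Icc t₁ t₂, 0 ≤ ρ t ∧ ρ t ≤ R) :
    t₂ - t₁ ≤ 2 * (R * c + Real.sqrt (R ^ 2 * c ^ 2 + 2 * R * ω)) / ω := by
  set m : ℝ := (t₁ + t₂) / 2 with hm
  set s : ℝ := (t₂ - t₁) / 2 with hs
  have hs0 : 0 < s := by rw [hs]; linarith
  have hm1 : t₁ < m := by rw [hm]; linarith
  have hm2 : m < t₂ := by rw [hm]; linarith
  have hms1 : m - t₁ = s := by rw [hm, hs]; ring
  have hms2 : t₂ - m = s := by rw [hm, hs]; ring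
  -- growth of g = ρ' + cρ
  have hgrow : ∀ a b, t₁ < a → a ≤ b → b < t₂ →
      ρ' a + c * ρ a + ω * (b - a) ≤ ρ' b + c * ρ b := by
    intro a b ha hab hb
    have hsub : Set.Icc a b ⊆ Set.Ioo t₁ t₂ := fun u hu =>
      ⟨lt_of_lt_of_le ha hu.1, lt_of_le_of_lt hu.2 hb⟩
    have hsub' : Set.Ioo a b ⊆ Set.Ioo t₁ t₂ := fun u hu =>
      ⟨ha.trans hu.1, hu.2.trans hb⟩
    have hder : ∀ u ∈ Set.Ioo t₁ t₂,
        HasDerivAt (fun u => ρ' u + c * ρ u - ω * u) (ρ'' u + c * ρ' u - ω) u := by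
      intro u hu
      have h := ((hd2 u hu).add ((hd1 u hu).const_mul c)).sub
        ((hasDerivAt_id u).const_mul ω)
      exact h.congr_deriv (by ring)
    have h := mono_aux (f := fun u => ρ' u + c * ρ u - ω * u)
        (f' := fun u => ρ'' u + c * ρ' u - ω) hab
      (fun u hu => (hder u (hsub hu)).continuousAt.continuousWithinAt)
      (fun u hu => hder u (hsub' hu))
      (fun u hu => sub_nonneg.2 (hineq u (hsub' hu)))
    linarith
  have hkey : ω * s ^ 2 / 2 ≤ R + c * R * s := by
    rcases le_or_gt 0 (ρ' m + c * ρ m) with hgm | hgm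
    · -- g(m) ≥ 0 : ρ grows fast on [m, t₂]
      have hp : ∀ t : ℝ, HasDerivAt (fun x => ω / 2 * x ^ 2 - (ω * m + c * R) * x)
          (ω * t - (ω * m + c * R)) t := by
        intro t
        have h1 : HasDerivAt (fun x : ℝ => x ^ 2) (2 * t) t := by
          simpa using hasDerivAt_pow 2 t
        have h := (h1.const_mul (ω / 2)).sub ((hasDerivAt_id t).const_mul (ω * m + c * R))
        exact h.congr_deriv (by ring)
      have hmono := mono_aux (a := m) (b := t₂)
        (f := fun t => ρ t - (ω / 2 * t ^ 2 - (ω * m + c * R) * t))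
        (f' := fun t => ρ' t - (ω * t - (ω * m + c * R))) hm2.le
        (fun u hu => ((hcont u ⟨hm1.le.trans hu.1, hu.2⟩).mono
            (Set.Icc_subset_Icc hm1.le le_rfl)).sub
          ((hp u).continuousAt.continuousWithinAt))
        (fun u hu => (hd1 u ⟨hm1.trans hu.1, hu.2⟩).sub (hp u))
        (fun u hu => by
          have h1 := hgrow m u hm1 hu.1.le hu.2
          have h2 : ρ u ≤ R := (hbound u ⟨(hm1.trans hu.1).le, hu.2.le⟩).2
          nlinarith)
      have hρm : 0 ≤ ρ m := (hbound m ⟨hm1.le, hm2.le⟩).1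
      have hρt₂ : ρ t₂ ≤ R := (hbound t₂ ⟨ht.le, le_rfl⟩).2
      have hq : (ω / 2 * t₂ ^ 2 - (ω * m + c * R) * t₂) -
          (ω / 2 * m ^ 2 - (ω * m + c * R) * m) = ω * s ^ 2 / 2 - c * R * s := by
        rw [hm, hs]; ring
      linarith
    · -- g(m) < 0 : ρ decreases fast on [t₁, m]
      have hp : ∀ t : ℝ, HasDerivAt (fun x => ω / 2 * x ^ 2 - ω * m * x)
          (ω * t - ω * m) t := by
        intro t
        have h1 : HasDerivAt (fun x : ℝ => x ^ 2) (2 * t) t := by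
          simpa using hasDerivAt_pow 2 t
        have h := (h1.const_mul (ω / 2)).sub ((hasDerivAt_id t).const_mul (ω * m))
        exact h.congr_deriv (by ring)
      have hmono := mono_aux (a := t₁) (b := m)
        (f := fun t => (ω / 2 * t ^ 2 - ω * m * t) - ρ t)
        (f' := fun t => (ω * t - ω * m) - ρ' t) hm1.le
        (fun u hu => ((hp u).continuousAt.continuousWithinAt).sub
          ((hcont u ⟨hu.1, hu.2.trans hm2.le⟩).mono
            (Set.Icc_subset_Icc le_rfl hm2.le)))
        (fun u hu => (hp u).sub (hd1 u ⟨hu.1, hu.2.trans hm2⟩))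
        (fun u hu => by
          have h1 := hgrow u m hu.1 hu.2.le hm2
          have h2 : 0 ≤ ρ u := (hbound u ⟨hu.1.le, (hu.2.trans hm2).le⟩).1
          have h3 : 0 ≤ c * ρ u := mul_nonneg hc.le h2
          linarith)
      have hρm : 0 ≤ ρ m := (hbound m ⟨hm1.le, hm2.le⟩).1
      have hρt₁ : ρ t₁ ≤ R := (hbound t₁ ⟨le_rfl, ht.le⟩).2
      have hcRs : 0 ≤ c * R * s := by positivity
      have hq : (ω / 2 * m ^ 2 - ω * m * m) -
          (ω / 2 * t₁ ^ 2 - ω * m * t₁) = -(ω * s ^ 2 / 2) := by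
        rw [hm, hs]; ring
      linarith
  -- solve the quadratic inequality
  set K : ℝ := Real.sqrt (R ^ 2 * c ^ 2 + 2 * R * ω) with hK
  have hK0 : 0 ≤ K := Real.sqrt_nonneg _
  have hsq : (ω * s - c * R) ^ 2 ≤ R ^ 2 * c ^ 2 + 2 * R * ω := by
    nlinarith [mul_pos hω hs0, hkey]
  have h1 : ω * s - c * R ≤ K := by
    calc ω * s - c * R ≤ |ω * s - c * R| := le_abs_self _
      _ = Real.sqrt ((ω * s - c * R) ^ 2) := (Real.sqrt_sq_eq_abs _).symm
      _ ≤ K := Real.sqrt_le_sqrt hsq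
  have hts : t₂ - t₁ = 2 * s := by rw [hs]; ring
  rw [hts, le_div_iff₀ hω]
  nlinarith [h1]
end

section
/- Let E : ℝ^k → ℝ be C¹, c > 0, t₁ < t₂, v_α, v⁻ ∈ ℝ^k with E(v_α) = α, and ω > 0. Suppose there exists ε₁ > 0 such that for every C¹ function φ : [t₁,t₂] → ℝ with φ > 0 on (t₁,t₂), φ(t₁)=φ(t₂)=0, and every ε ∈ (0, ε₁) and t ∈ [t₁,t₂]: (d/dλ) E(v⁻ + λ(v_α - v⁻)) ≥ ω for all λ ∈ [1 - ε₁ φ(t), 1]. Then for all sufficiently small ε > 0 the function U_ε(t) = v⁻ + (1 - εφ(t))(v_α - v⁻) satisfies U_ε(t₁) = U_ε(t₂) = v_α, E(U_ε(t)) < α for t ∈ (t₁, t₂), and ∫_{t₁}^{t₂}(|U_ε'|²/2 + E(U_ε)) e^{ct} dt < ∫_{t₁}^{t₂}(|v_α'|²/2 + E(v_α)) e^{ct} dt = α (e^{ct₂}-e^{ct₁})/c. -/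
open MeasureTheory Set intervalIntegral

/-- A constant curve sitting at a non-minimal energy level `α` along a direction
of uniform strict monotonicity of the potential is not energy minimizing: the
inward radial perturbation `U_ε` strictly decreases the weighted energy. -/
theorem constant_curve_not_minimizing {k : ℕ}
    (E : EuclideanSpace ℝ (Fin k) → ℝ) (hE : ContDiff ℝ 1 E)
    (c t₁ t₂ α ω : ℝ) (hc : 0 < c) (ht : t₁ < t₂) (hω : 0 < ω)
    (vα vm : EuclideanSpace ℝ (Fin k)) (hvα : E vα = α)
    (φ : ℝ → ℝ) (hφ : ContDiff ℝ 1 φ)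
    (hφpos : ∀ t ∈ Ioo t₁ t₂, 0 < φ t) (hφ₁ : φ t₁ = 0) (hφ₂ : φ t₂ = 0)
    (ε₁ : ℝ) (hε₁ : 0 < ε₁)
    (hmono : ∀ t ∈ Icc t₁ t₂, ∀ lam ∈ Icc (1 - ε₁ * φ t) 1,
      ω ≤ deriv (fun l : ℝ => E (vm + l • (vα - vm))) lam) :
    ∃ ε₀ > 0, ∀ ε ∈ Ioo 0 ε₀,
      (fun t => vm + (1 - ε * φ t) • (vα - vm)) t₁ = vα ∧
      (fun t => vm + (1 - ε * φ t) • (vα - vm)) t₂ = vα ∧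
      (∀ t ∈ Ioo t₁ t₂, E (vm + (1 - ε * φ t) • (vα - vm)) < α) ∧
      (∫ t in t₁..t₂,
          (‖deriv (fun s => vm + (1 - ε * φ s) • (vα - vm)) t‖ ^ 2 / 2 +
            E (vm + (1 - ε * φ t) • (vα - vm))) * Real.exp (c * t)) <
        α * (Real.exp (c * t₂) - Real.exp (c * t₁)) / c := by
  set d : EuclideanSpace ℝ (Fin k) := vα - vm with hd
  have hvmd : vm + d = vα := by rw [hd]; abel
  -- basic continuity facts
  have hφc : Continuous φ := hφ.continuous
  have hφ'c : Continuous (deriv φ) := hφ.continuous_deriv le_rfl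
  have hexp : Continuous fun t => Real.exp (c * t) :=
    Real.continuous_exp.comp (continuous_const.mul continuous_id)
  -- nonnegativity of φ on [t₁, t₂]
  have hφnn : ∀ t ∈ Icc t₁ t₂, 0 ≤ φ t := by
    intro t htm
    rcases eq_or_lt_of_le htm.1 with h1 | h1
    · simp [← h1, hφ₁]
    rcases eq_or_lt_of_le htm.2 with h2 | h2
    · simp [h2, hφ₂]
    · exact (hφpos t ⟨h1, h2⟩).le
  -- the scalar potential along the segment
  set g : ℝ → ℝ := fun l : ℝ => E (vm + l • d) with hg
  have hgdiff : Differentiable ℝ g :=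
    (hE.differentiable one_ne_zero).comp ((differentiable_id.smul_const d).const_add vm)
  have hg1 : g 1 = α := by simp [hg, hvmd, hvα]
  -- key pointwise energy estimate
  have hkey : ∀ ε : ℝ, 0 < ε → ε ≤ ε₁ → ∀ t ∈ Icc t₁ t₂,
      E (vm + (1 - ε * φ t) • d) ≤ α - ω * (ε * φ t) := by
    intro ε hε hεle t htm
    rcases eq_or_lt_of_le (hφnn t htm) with h0 | h0
    · have : (1 : ℝ) - ε * φ t = 1 := by rw [← h0]; ring
      rw [this, one_smul, hvmd, hvα, ← h0]
      simp
    · have ha : 1 - ε * φ t < 1 := by nlinarith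
      obtain ⟨ξ, hξ, hξeq⟩ := exists_deriv_eq_slope g ha
        (hgdiff.continuous.continuousOn) (hgdiff.differentiableOn)
      have hξmem : ξ ∈ Icc (1 - ε₁ * φ t) 1 := by
        constructor
        · have : 1 - ε₁ * φ t ≤ 1 - ε * φ t := by nlinarith
          exact le_trans this hξ.1.le
        · exact hξ.2.le
      have hmω : ω ≤ deriv g ξ := hmono t htm ξ hξmem
      rw [hξeq] at hmω
      have h1a : (0:ℝ) < 1 - (1 - ε * φ t) := by nlinarith
      rw [le_div_iff₀ h1a] at hmω
      have : g (1 - ε * φ t) ≤ g 1 - ω * (ε * φ t) := by nlinarith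
      rw [hg1] at this
      exact this
  -- continuity of the perturbed curve and its energy
  have hUc : ∀ ε : ℝ, Continuous fun t => vm + (1 - ε * φ t) • d := by
    intro ε
    exact continuous_const.add ((continuous_const.sub
      (continuous_const.mul hφc)).smul continuous_const)
  -- derivative of the perturbed curve
  have hU' : ∀ ε : ℝ, ∀ t : ℝ, HasDerivAt (fun s => vm + (1 - ε * φ s) • d)
      ((-(ε * deriv φ t)) • d) t := by
    intro ε t
    have h1 : HasDerivAt (fun s => 1 - ε * φ s) (-(ε * deriv φ t)) t :=
      (((hφ.differentiable one_ne_zero t).hasDerivAt).const_mul ε).const_sub 1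
    exact (h1.smul_const d).const_add vm
  -- the relevant integrals
  set C := ∫ t in t₁..t₂, Real.exp (c * t) with hC
  have hCval : C = (Real.exp (c * t₂) - Real.exp (c * t₁)) / c := by
    rw [hC]
    rw [intervalIntegral.integral_comp_mul_left (fun x => Real.exp x) (ne_of_gt hc)]
    rw [integral_exp]
    rw [smul_eq_mul]
    ring
  set A := ∫ t in t₁..t₂, ((deriv φ t) ^ 2 * ‖d‖ ^ 2 / 2) * Real.exp (c * t) with hA
  set B := ω * ∫ t in t₁..t₂, φ t * Real.exp (c * t) with hB
  have hAnn : 0 ≤ A := by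
    rw [hA]
    apply intervalIntegral.integral_nonneg ht.le
    intro t _
    positivity
  have hBpos : 0 < B := by
    rw [hB]
    apply mul_pos hω
    apply intervalIntegral.intervalIntegral_pos_of_pos_on
    · exact (hφc.mul hexp).intervalIntegrable t₁ t₂
    · intro t htm
      exact mul_pos (hφpos t htm) (Real.exp_pos _)
    · exact ht
  refine ⟨min ε₁ (B / (A + 1)), lt_min hε₁ (by positivity), ?_⟩
  intro ε hεm
  obtain ⟨hε, hεlt⟩ := hεm
  have hεle : ε ≤ ε₁ := le_of_lt (lt_of_lt_of_le hεlt (min_le_left _ _))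
  have hεB : ε * A < B := by
    have h1 : ε < B / (A + 1) := lt_of_lt_of_le hεlt (min_le_right _ _)
    have h2 : ε * (A + 1) < B := by
      rw [← lt_div_iff₀ (by positivity)]; exact h1
    nlinarith
  refine ⟨?_, ?_, ?_, ?_⟩
  · simp [hφ₁, hvmd]
  · simp [hφ₂, hvmd]
  · intro t htm
    have := hkey ε hε hεle t ⟨htm.1.le, htm.2.le⟩
    have hpos := hφpos t htm
    nlinarith [mul_pos hω (mul_pos hε hpos)]
  -- the main integral estimate
  · have hderiv : ∀ t : ℝ, deriv (fun s => vm + (1 - ε * φ s) • d) t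
        = (-(ε * deriv φ t)) • d := fun t => (hU' ε t).deriv
    have hnorm : ∀ t : ℝ, ‖deriv (fun s => vm + (1 - ε * φ s) • d) t‖ ^ 2 / 2
        = ε ^ 2 * ((deriv φ t) ^ 2 * ‖d‖ ^ 2 / 2) := by
      intro t
      rw [hderiv t, norm_smul]
      simp [mul_pow, sq_abs]
      ring
    have hEUc : Continuous fun t => E (vm + (1 - ε * φ t) • d) :=
      hE.continuous.comp (hUc ε)
    -- first rewrite the integrand
    have hstep1 : (∫ t in t₁..t₂,
          (‖deriv (fun s => vm + (1 - ε * φ s) • d) t‖ ^ 2 / 2 +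
            E (vm + (1 - ε * φ t) • d)) * Real.exp (c * t))
        = ∫ t in t₁..t₂,
          (ε ^ 2 * ((deriv φ t) ^ 2 * ‖d‖ ^ 2 / 2) +
            E (vm + (1 - ε * φ t) • d)) * Real.exp (c * t) := by
      apply intervalIntegral.integral_congr
      intro t _
      dsimp only
      rw [hnorm t]
    rw [hstep1]
    -- integrability of the two comparison integrands
    have hint1 : IntervalIntegrable (fun t =>
        (ε ^ 2 * ((deriv φ t) ^ 2 * ‖d‖ ^ 2 / 2) +
          E (vm + (1 - ε * φ t) • d)) * Real.exp (c * t)) volume t₁ t₂ := by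
      apply Continuous.intervalIntegrable
      exact ((continuous_const.mul (((hφ'c.pow 2).mul continuous_const).div_const 2)).add
        hEUc).mul hexp
    have hint2 : IntervalIntegrable (fun t =>
        (ε ^ 2 * ((deriv φ t) ^ 2 * ‖d‖ ^ 2 / 2) +
          (α - ω * (ε * φ t))) * Real.exp (c * t)) volume t₁ t₂ := by
      apply Continuous.intervalIntegrable
      exact ((continuous_const.mul (((hφ'c.pow 2).mul continuous_const).div_const 2)).add
        (continuous_const.sub (continuous_const.mul (continuous_const.mul hφc)))).mul hexp
    have hmono' : (∫ t in t₁..t₂,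
          (ε ^ 2 * ((deriv φ t) ^ 2 * ‖d‖ ^ 2 / 2) +
            E (vm + (1 - ε * φ t) • d)) * Real.exp (c * t))
        ≤ ∫ t in t₁..t₂,
          (ε ^ 2 * ((deriv φ t) ^ 2 * ‖d‖ ^ 2 / 2) +
            (α - ω * (ε * φ t))) * Real.exp (c * t) := by
      apply intervalIntegral.integral_mono_on ht.le hint1 hint2
      intro t htm
      have h1 := hkey ε hε hεle t htm
      have hepos := (Real.exp_pos (c * t)).le
      have h2 : ε ^ 2 * ((deriv φ t) ^ 2 * ‖d‖ ^ 2 / 2) + E (vm + (1 - ε * φ t) • d)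
          ≤ ε ^ 2 * ((deriv φ t) ^ 2 * ‖d‖ ^ 2 / 2) + (α - ω * (ε * φ t)) := by
        linarith
      exact mul_le_mul_of_nonneg_right h2 hepos
    -- compute the middle integral
    have hmid : (∫ t in t₁..t₂,
          (ε ^ 2 * ((deriv φ t) ^ 2 * ‖d‖ ^ 2 / 2) +
            (α - ω * (ε * φ t))) * Real.exp (c * t))
        = ε ^ 2 * A + α * C - ε * B := by
      have heq : (fun t => (ε ^ 2 * ((deriv φ t) ^ 2 * ‖d‖ ^ 2 / 2) +
            (α - ω * (ε * φ t))) * Real.exp (c * t))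
          = fun t => ε ^ 2 * (((deriv φ t) ^ 2 * ‖d‖ ^ 2 / 2) * Real.exp (c * t)) +
            (α * Real.exp (c * t) - (ω * ε) * (φ t * Real.exp (c * t))) := by
        funext t; ring
      rw [heq]
      rw [intervalIntegral.integral_add
        (f := fun t => ε ^ 2 * (((deriv φ t) ^ 2 * ‖d‖ ^ 2 / 2) * Real.exp (c * t)))
        (g := fun t => α * Real.exp (c * t) - (ω * ε) * (φ t * Real.exp (c * t)))
        ((continuous_const.mul ((((hφ'c.pow 2).mul continuous_const).div_const 2).mul
          hexp)).intervalIntegrable t₁ t₂)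
        ((continuous_const.mul hexp).sub
          (continuous_const.mul (hφc.mul hexp)) |>.intervalIntegrable t₁ t₂)]
      rw [intervalIntegral.integral_sub
        (f := fun t => α * Real.exp (c * t)) (g := fun t => (ω * ε) * (φ t * Real.exp (c * t)))
        ((continuous_const.mul hexp).intervalIntegrable t₁ t₂)
        ((continuous_const.mul (hφc.mul hexp)).intervalIntegrable t₁ t₂)]
      rw [intervalIntegral.integral_const_mul, intervalIntegral.integral_const_mul,
        intervalIntegral.integral_const_mul]
      rw [hA, hB, hC]
      ring
    have hfin : ε ^ 2 * A + α * C - ε * B < α * C := by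
      clear_value A B C
      have h1 : ε * (ε * A) < ε * B := mul_lt_mul_of_pos_left hεB hε
      have h2 : ε ^ 2 * A = ε * (ε * A) := by ring
      linarith
    calc (∫ t in t₁..t₂,
          (ε ^ 2 * ((deriv φ t) ^ 2 * ‖d‖ ^ 2 / 2) +
            E (vm + (1 - ε * φ t) • d)) * Real.exp (c * t))
        ≤ ε ^ 2 * A + α * C - ε * B := by rw [← hmid]; exact hmono'
      _ < α * C := hfin
      _ = α * (Real.exp (c * t₂) - Real.exp (c * t₁)) / c := by
          rw [hCval]; ring
end

section
/- Let c > 0 and let V : ℝ → ℝ^k be in H¹_loc with ∫_{-∞}^{t̃} (|V'(t)|²/2) e^{ct} dt > 0 for some t̃ ∈ ℝ, and suppose E(V(t)) = α is constant for all t ≤ t̃, where E : ℝ^k → ℝ. Define Ũ(t) = V(t/2 + t̃/2) for t ≤ t̃ and Ũ(t) = V(t) for t ≥ t̃. Then ∫_ℝ E(Ũ(t)) e^{ct} dt = ∫_ℝ E(V(t)) e^{ct} dt (whenever both are finite) and ∫_{-∞}^{t̃} (|Ũ'|²/2) e^{ct} dt ≤ (1/2) ∫_{-∞}^{t̃} (|V'|²/2)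 e^{ct} dt, hence ∫_ℝ (|Ũ'|²/2 + E(Ũ)) e^{ct} dt < ∫_ℝ (|V'|²/2 + E(V)) e^{ct} dt. -/
open MeasureTheory Set

/-- Slowing-down comparison: if `E(V(·))` is constant on `(-∞, t̃]` and the
kinetic energy there is positive, the rescaled curve `Ũ` has the same potential
energy, at most half the kinetic energy on `(-∞, t̃]`, and strictly smaller total
weighted energy. -/
theorem rescaling_strictly_decreases_energy {k : ℕ}
    (E : EuclideanSpace ℝ (Fin k) → ℝ)
    (c α tt : ℝ) (hc : 0 < c)
    (V V' : ℝ → EuclideanSpace ℝ (Fin k))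
    (hV : ∀ t : ℝ, HasDerivAt V (V' t) t)
    (hconst : ∀ t ≤ tt, E (V t) = α)
    (hkinpos : 0 < ∫ t in Iic tt, ‖V' t‖ ^ 2 / 2 * Real.exp (c * t))
    (Ut Ut' : ℝ → EuclideanSpace ℝ (Fin k))
    (hUt : ∀ t : ℝ, Ut t = if t ≤ tt then V (t / 2 + tt / 2) else V t)
    (hUt' : ∀ t : ℝ, Ut' t = if t ≤ tt then (1 / 2 : ℝ) • V' (t / 2 + tt / 2) else V' t)
    (hEV : Integrable (fun t => E (V t) * Real.exp (c * t)))
    (hEUt : Integrable (fun t => E (Ut t) * Real.exp (c * t)))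
    (hkinV : Integrable (fun t => ‖V' t‖ ^ 2 / 2 * Real.exp (c * t)))
    (hkinUt : Integrable (fun t => ‖Ut' t‖ ^ 2 / 2 * Real.exp (c * t))) :
    (∫ t : ℝ, E (Ut t) * Real.exp (c * t)) = (∫ t : ℝ, E (V t) * Real.exp (c * t)) ∧
    (∫ t in Iic tt, ‖Ut' t‖ ^ 2 / 2 * Real.exp (c * t)) ≤
      (1 / 2) * ∫ t in Iic tt, ‖V' t‖ ^ 2 / 2 * Real.exp (c * t) ∧
    (∫ t : ℝ, (‖Ut' t‖ ^ 2 / 2 + E (Ut t)) * Real.exp (c * t)) <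
      ∫ t : ℝ, (‖V' t‖ ^ 2 / 2 + E (V t)) * Real.exp (c * t) := by
  -- the "half point" map
  have hmid : ∀ t : ℝ, t ≤ tt → t / 2 + tt / 2 ≤ tt := fun t ht => by linarith
  -- potential integrands are equal pointwise
  have hpot : (fun t => E (Ut t) * Real.exp (c * t)) =
      fun t => E (V t) * Real.exp (c * t) := by
    funext t
    rw [hUt t]
    by_cases ht : t ≤ tt
    · rw [if_pos ht, hconst _ (hmid t ht), hconst _ ht]
    · rw [if_neg ht]
  have hpot_eq : (∫ t : ℝ, E (Ut t) * Real.exp (c * t)) =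
      ∫ t : ℝ, E (V t) * Real.exp (c * t) := by rw [hpot]
  -- kinetic densities
  set g : ℝ → ℝ := fun s => ‖V' s‖ ^ 2 / 2 * Real.exp (c * s) with hg_def
  have hg : Integrable g := hkinV
  set gi : ℝ → ℝ := (Iic tt).indicator g with hgi_def
  have hgi : Integrable gi := hg.indicator measurableSet_Iic
  -- substitution identity : ∫ gi(t/2+tt/2) = 2 ∫ gi
  have hsubst : (∫ t : ℝ, gi (t / 2 + tt / 2)) = 2 * ∫ t : ℝ, gi t := by
    have h1 : (fun t : ℝ => gi (t / 2 + tt / 2)) =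
        fun t : ℝ => (fun x : ℝ => gi ((1 / 2 : ℝ) * x)) (t + tt) := by
      funext t; ring_nf
    rw [h1, integral_add_right_eq_self (fun x : ℝ => gi ((1 / 2 : ℝ) * x)) tt,
      MeasureTheory.Measure.integral_comp_mul_left gi (1 / 2 : ℝ)]
    norm_num
  have hgicomp : Integrable (fun t : ℝ => gi (t / 2 + tt / 2)) := by
    have h1 : (fun t : ℝ => gi (t / 2 + tt / 2)) =
        fun t : ℝ => (fun x : ℝ => gi ((1 / 2 : ℝ) * x)) (t + tt) := by
      funext t; ring_nf
    rw [h1]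
    exact (hgi.comp_mul_left' (R := (1 / 2 : ℝ)) (by norm_num)).comp_add_right tt
  -- the indicator of the composed function
  have hind : (Iic tt).indicator (fun t : ℝ => g (t / 2 + tt / 2)) =
      fun t : ℝ => gi (t / 2 + tt / 2) := by
    funext t
    by_cases ht : t ≤ tt
    · rw [indicator_of_mem (mem_Iic.2 ht), hgi_def,
        indicator_of_mem (mem_Iic.2 (hmid t ht))]
    · rw [indicator_of_notMem (fun h => ht (mem_Iic.1 h)), hgi_def,
        indicator_of_notMem]
      intro h
      exact ht (by have := mem_Iic.1 h; linarith)
  have hKset : (∫ t in Iic tt, g (t / 2 + tt / 2)) = 2 * ∫ t in Iic tt, g t := by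
    rw [← integral_indicator measurableSet_Iic, hind, hsubst,
      ← integral_indicator measurableSet_Iic]
  have hgcompOn : IntegrableOn (fun t : ℝ => g (t / 2 + tt / 2)) (Iic tt) := by
    exact (integrable_indicator_iff measurableSet_Iic).mp (by rw [hind]; exact hgicomp)
  -- kinetic on Iic for Ut equals a quarter of composed kinetic, with smaller weight
  have hUtkin_eq : (∫ t in Iic tt, ‖Ut' t‖ ^ 2 / 2 * Real.exp (c * t)) =
      ∫ t in Iic tt, 1 / 4 * (‖V' (t / 2 + tt / 2)‖ ^ 2 / 2) * Real.exp (c * t) := by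
    refine setIntegral_congr_fun measurableSet_Iic fun t ht => ?_
    rw [hUt' t, if_pos (mem_Iic.1 ht), norm_smul]
    simp [mul_pow]
    ring
  have hUtOn : IntegrableOn
      (fun t => 1 / 4 * (‖V' (t / 2 + tt / 2)‖ ^ 2 / 2) * Real.exp (c * t)) (Iic tt) := by
    refine (hkinUt.integrableOn (s := Iic tt)).congr_fun ?_ measurableSet_Iic
    intro t ht
    dsimp only
    rw [hUt' t, if_pos (mem_Iic.1 ht), norm_smul]
    simp [mul_pow]
    ring
  have hRHSOn : IntegrableOn (fun t : ℝ => 1 / 4 * g (t / 2 + tt / 2)) (Iic tt) :=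
    (hgcompOn.const_mul (1 / 4 : ℝ))
  have hmono : (∫ t in Iic tt, 1 / 4 * (‖V' (t / 2 + tt / 2)‖ ^ 2 / 2) * Real.exp (c * t)) ≤
      ∫ t in Iic tt, 1 / 4 * g (t / 2 + tt / 2) := by
    refine setIntegral_mono_on hUtOn hRHSOn measurableSet_Iic fun t ht => ?_
    have ht' := mem_Iic.1 ht
    have hexp : Real.exp (c * t) ≤ Real.exp (c * (t / 2 + tt / 2)) := by
      apply Real.exp_le_exp.2
      nlinarith
    have hnn : (0 : ℝ) ≤ 1 / 4 * (‖V' (t / 2 + tt / 2)‖ ^ 2 / 2) := by positivity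
    calc 1 / 4 * (‖V' (t / 2 + tt / 2)‖ ^ 2 / 2) * Real.exp (c * t)
        ≤ 1 / 4 * (‖V' (t / 2 + tt / 2)‖ ^ 2 / 2) * Real.exp (c * (t / 2 + tt / 2)) :=
          mul_le_mul_of_nonneg_left hexp hnn
      _ = 1 / 4 * g (t / 2 + tt / 2) := by rw [hg_def]; ring
  have hkin_half : (∫ t in Iic tt, ‖Ut' t‖ ^ 2 / 2 * Real.exp (c * t)) ≤
      (1 / 2) * ∫ t in Iic tt, ‖V' t‖ ^ 2 / 2 * Real.exp (c * t) := by
    rw [hUtkin_eq]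
    refine hmono.trans ?_
    rw [integral_const_mul, hKset]
    have : (∫ t in Iic tt, g t) = ∫ t in Iic tt, ‖V' t‖ ^ 2 / 2 * Real.exp (c * t) := rfl
    rw [this]; linarith
  refine ⟨hpot_eq, hkin_half, ?_⟩
  -- now the strict total inequality
  have hsplit : ∀ (W : ℝ → EuclideanSpace ℝ (Fin k)) (F : ℝ → ℝ),
      Integrable (fun t => ‖W t‖ ^ 2 / 2 * Real.exp (c * t)) →
      Integrable (fun t => F t * Real.exp (c * t)) →
      (∫ t : ℝ, (‖W t‖ ^ 2 / 2 + F t) * Real.exp (c * t)) =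
        (∫ t : ℝ, ‖W t‖ ^ 2 / 2 * Real.exp (c * t)) +
          ∫ t : ℝ, F t * Real.exp (c * t) := by
    intro W F h1 h2
    rw [← integral_add h1 h2]
    congr 1; funext t; ring
  rw [hsplit Ut' (fun t => E (Ut t)) hkinUt hEUt,
    hsplit V' (fun t => E (V t)) hkinV hEV, hpot_eq]
  have hIoi_eq : (∫ t in Ioi tt, ‖Ut' t‖ ^ 2 / 2 * Real.exp (c * t)) =
      ∫ t in Ioi tt, ‖V' t‖ ^ 2 / 2 * Real.exp (c * t) := by
    refine setIntegral_congr_fun measurableSet_Ioi fun t ht => ?_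
    rw [hUt' t, if_neg (not_le.2 (mem_Ioi.1 ht))]
  have hUtdecomp : (∫ t : ℝ, ‖Ut' t‖ ^ 2 / 2 * Real.exp (c * t)) =
      (∫ t in Iic tt, ‖Ut' t‖ ^ 2 / 2 * Real.exp (c * t)) +
        ∫ t in Ioi tt, ‖Ut' t‖ ^ 2 / 2 * Real.exp (c * t) :=
    (intervalIntegral.integral_Iic_add_Ioi hkinUt.integrableOn hkinUt.integrableOn).symm
  have hVdecomp : (∫ t : ℝ, ‖V' t‖ ^ 2 / 2 * Real.exp (c * t)) =
      (∫ t in Iic tt, ‖V' t‖ ^ 2 / 2 * Real.exp (c * t)) +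
        ∫ t in Ioi tt, ‖V' t‖ ^ 2 / 2 * Real.exp (c * t) :=
    (intervalIntegral.integral_Iic_add_Ioi hkinV.integrableOn hkinV.integrableOn).symm
  have hkin_strict : (∫ t : ℝ, ‖Ut' t‖ ^ 2 / 2 * Real.exp (c * t)) <
      ∫ t : ℝ, ‖V' t‖ ^ 2 / 2 * Real.exp (c * t) := by
    rw [hUtdecomp, hVdecomp, hIoi_eq]
    have : (∫ t in Iic tt, ‖Ut' t‖ ^ 2 / 2 * Real.exp (c * t)) <
        ∫ t in Iic tt, ‖V' t‖ ^ 2 / 2 * Real.exp (c * t) :=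
      lt_of_le_of_lt hkin_half (by linarith)
    linarith
  linarith
end
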